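/- Let g: ℝ^p → ℝ be convex and L_g-smooth, H a symmetric positive definite matrix whose smallest and largest singular values are σ_min and σ_max, and γ > 0. Then for all y, ỹ ∈ ℝ^p, ‖y − ỹ‖ ≤ (σ_max/σ_min + γ L_g σ_max) · ‖prox^{H⁻¹}_{γg}(y) − prox^{H⁻¹}_{γg}(ỹ)‖. -/
import Mathlib

open Finset
open scoped RealInnerProductSpace

noncomputable section

variable {p : ℕ}

/-- `z = prox^M_{γ g}(x)` for a real-valued `g`: `z` minimizes `w ↦ g(w) + (1/(2γ)) ‖x − w‖²_M`. -/
def IsScaledProxR (M : EuclideanSpace ℝ (Fin p) →ₗ[ℝ] EuclideanSpace ℝ (Fin p)) (γ : ℝ)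
    (g : EuclideanSpace ℝ (Fin p) → ℝ) (x z : EuclideanSpace ℝ (Fin p)) : Prop :=
  ∀ w, g z + (1 / (2 * γ)) * ⟪x - z, M (x - z)⟫ ≤ g w + (1 / (2 * γ)) * ⟪x - w, M (x - w)⟫

lemma prox_opt_aux
    (g : EuclideanSpace ℝ (Fin p) → ℝ)
    (gradg : EuclideanSpace ℝ (Fin p) → EuclideanSpace ℝ (Fin p))
    (hgdiff : ∀ x, HasGradientAt g (gradg x) x)
    (H Hinv : EuclideanSpace ℝ (Fin p) →ₗ[ℝ] EuclideanSpace ℝ (Fin p))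
    (hsymm : ∀ x y, ⟪H x, y⟫ = ⟪x, H y⟫)
    (hinv₁ : ∀ x, H (Hinv x) = x)
    (γ : ℝ) (hγ : 0 < γ)
    (y z : EuclideanSpace ℝ (Fin p)) (hz : IsScaledProxR Hinv γ g y z) :
    y - z = γ • H (gradg z) := by
  have hsymm' : ∀ a b : EuclideanSpace ℝ (Fin p), ⟪Hinv a, b⟫ = ⟪a, Hinv b⟫ := by
    intro a b
    calc ⟪Hinv a, b⟫ = ⟪Hinv a, H (Hinv b)⟫ := by rw [hinv₁]
    _ = ⟪H (Hinv a), Hinv b⟫ := by rw [hsymm]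
    _ = ⟪a, Hinv b⟫ := by rw [hinv₁]
  set c : ℝ := 1 / (2 * γ) with hc
  set T : EuclideanSpace ℝ (Fin p) →L[ℝ] EuclideanSpace ℝ (Fin p) :=
    Hinv.toContinuousLinearMap with hT
  have hTc : ∀ v : EuclideanSpace ℝ (Fin p), T v = Hinv v := fun v => rfl
  have hsub : HasFDerivAt (fun w : EuclideanSpace ℝ (Fin p) => y - w)
      ((0 : EuclideanSpace ℝ (Fin p) →L[ℝ] EuclideanSpace ℝ (Fin p)) -
        ContinuousLinearMap.id ℝ (EuclideanSpace ℝ (Fin p))) z :=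
    (hasFDerivAt_const y z).sub (hasFDerivAt_id z)
  have hHinv : HasFDerivAt (fun w : EuclideanSpace ℝ (Fin p) => Hinv (y - w))
      (T.comp ((0 : EuclideanSpace ℝ (Fin p) →L[ℝ] EuclideanSpace ℝ (Fin p)) -
        ContinuousLinearMap.id ℝ (EuclideanSpace ℝ (Fin p)))) z :=
    T.hasFDerivAt.comp z hsub
  have hq : HasFDerivAt (fun w : EuclideanSpace ℝ (Fin p) => ⟪y - w, Hinv (y - w)⟫)
      ((fderivInnerCLM ℝ (y - z, Hinv (y - z))).comp
        (((0 : EuclideanSpace ℝ (Fin p) →L[ℝ] EuclideanSpace ℝ (Fin p)) -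
          ContinuousLinearMap.id ℝ (EuclideanSpace ℝ (Fin p))).prod
          (T.comp ((0 : EuclideanSpace ℝ (Fin p) →L[ℝ] EuclideanSpace ℝ (Fin p)) -
            ContinuousLinearMap.id ℝ (EuclideanSpace ℝ (Fin p)))))) z :=
    hsub.inner ℝ hHinv
  have hg' : HasFDerivAt g
      (InnerProductSpace.toDual ℝ (EuclideanSpace ℝ (Fin p)) (gradg z)) z :=
    (hgdiff z).hasFDerivAt
  have hF := hg'.add (hq.const_mul c)
  have hmin : IsLocalMin (fun w : EuclideanSpace ℝ (Fin p) =>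
      g w + c * ⟪y - w, Hinv (y - w)⟫) z :=
    Filter.Eventually.of_forall hz
  have heq := hmin.hasFDerivAt_eq_zero hF
  have key : ∀ v : EuclideanSpace ℝ (Fin p),
      ⟪gradg z - (2 * c) • Hinv (y - z), v⟫ = 0 := by
    intro v
    have h1 := congrFun (congrArg (fun (L : _ →L[ℝ] ℝ) => (L : _ → ℝ)) heq) v
    simp only [ContinuousLinearMap.add_apply, ContinuousLinearMap.coe_smul',
      Pi.smul_apply, InnerProductSpace.toDual_apply_apply, ContinuousLinearMap.comp_apply,
      ContinuousLinearMap.prod_apply, ContinuousLinearMap.sub_apply,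
      ContinuousLinearMap.zero_apply, ContinuousLinearMap.coe_id', id_eq,
      fderivInnerCLM_apply, zero_sub, ContinuousLinearMap.neg_apply,
      ContinuousLinearMap.coe_zero, Pi.zero_apply, smul_eq_mul] at h1
    rw [hTc] at h1
    have e1 : ⟪y - z, Hinv (-v)⟫ = -⟪Hinv (y - z), v⟫ := by
      rw [← hsymm', inner_neg_right]
    have e2 : ⟪-v, Hinv (y - z)⟫ = -⟪Hinv (y - z), v⟫ := by
      rw [inner_neg_left, real_inner_comm]
    rw [e1, e2] at h1
    rw [inner_sub_left, real_inner_smul_left]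
    linarith
  have hzero : gradg z - (2 * c) • Hinv (y - z) = 0 := by
    have h4 := key (gradg z - (2 * c) • Hinv (y - z))
    rwa [real_inner_self_eq_norm_sq, pow_eq_zero_iff (by norm_num : 2 ≠ 0),
      norm_eq_zero] at h4
  have h2c : 2 * c = 1 / γ := by rw [hc]; field_simp
  have hb : Hinv (y - z) = γ • gradg z := by
    have h3 : gradg z = (1 / γ) • Hinv (y - z) := by
      have h5 := sub_eq_zero.mp hzero; rw [h5, h2c]
    rw [h3, smul_smul]
    rw [mul_one_div, div_self (ne_of_gt hγ), one_smul]
  have h6 := congrArg H hb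
  rw [hinv₁] at h6
  rw [h6, map_smul]

lemma Hop_aux (H : EuclideanSpace ℝ (Fin p) →ₗ[ℝ] EuclideanSpace ℝ (Fin p))
    (hsymm : ∀ x y, ⟪H x, y⟫ = ⟪x, H y⟫)
    (σmin σmax : ℝ) (hσmin : 0 < σmin)
    (hlow : ∀ x, σmin * ‖x‖ ^ 2 ≤ ⟪x, H x⟫)
    (hup : ∀ x, ⟪x, H x⟫ ≤ σmax * ‖x‖ ^ 2)
    (x : EuclideanSpace ℝ (Fin p)) : ‖H x‖ ≤ σmax * ‖x‖ := by
  by_cases hb0 : H x = 0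
  · rw [hb0, norm_zero]
    by_cases hx0 : x = 0
    · simp [hx0]
    · exfalso
      have h1 := hlow x
      rw [hb0, inner_zero_right] at h1
      have hxn : 0 < ‖x‖ := norm_pos_iff.mpr hx0
      nlinarith [pow_pos hxn 2]
  · set b := H x with hbdef
    have hbn : 0 < ‖b‖ := norm_pos_iff.mpr hb0
    have hbb : 0 < ⟪b, H b⟫ := lt_of_lt_of_le (by positivity) (hlow b)
    have hσmax : 0 < σmax := by
      have h7 := le_trans (hlow b) (hup b)
      nlinarith [pow_pos hbn 2]
    set t : ℝ := -(‖b‖ ^ 2 / ⟪b, H b⟫) with ht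
    have h0 : (0 : ℝ) ≤ ⟪x + t • b, H (x + t • b)⟫ :=
      le_trans (by positivity) (hlow _)
    have hexp : ⟪x + t • b, H (x + t • b)⟫ =
        ⟪x, H x⟫ + 2 * t * ‖b‖ ^ 2 + t ^ 2 * ⟪b, H b⟫ := by
      have e1 : ⟪x, H b⟫ = ‖b‖ ^ 2 := by
        rw [← hsymm, ← hbdef, real_inner_self_eq_norm_sq]
      have e2 : ⟪b, H x⟫ = ‖b‖ ^ 2 := by
        rw [← hbdef, real_inner_self_eq_norm_sq]
      simp only [map_add, map_smul, inner_add_left, inner_add_right,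
        real_inner_smul_left, real_inner_smul_right]
      rw [e1, e2]; ring
    rw [hexp, ht] at h0
    set A := ⟪x, H x⟫ with hA
    set B := ⟪b, H b⟫ with hB
    have hBne : B ≠ 0 := ne_of_gt hbb
    have heq2 : A + 2 * -(‖b‖ ^ 2 / B) * ‖b‖ ^ 2 + (-(‖b‖ ^ 2 / B)) ^ 2 * B
        = A - ‖b‖ ^ 4 / B := by field_simp; ring
    rw [heq2] at h0
    have h1 : ‖b‖ ^ 4 ≤ A * B := by
      have h8 : ‖b‖ ^ 4 / B ≤ A := by linarith
      calc ‖b‖ ^ 4 = (‖b‖ ^ 4 / B) * B := by field_simp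
      _ ≤ A * B := mul_le_mul_of_nonneg_right h8 (le_of_lt hbb)
    have h2 : A * B ≤ (σmax * ‖x‖ ^ 2) * (σmax * ‖b‖ ^ 2) := by
      have hxx : 0 ≤ A := le_trans (by positivity) (hlow x)
      exact mul_le_mul (hup x) (hup b) (le_of_lt hbb) (by positivity)
    have h3 : ‖b‖ ^ 2 ≤ (σmax * ‖x‖) ^ 2 := by nlinarith [pow_pos hbn 2]
    nlinarith [norm_nonneg x, mul_nonneg (le_of_lt hσmax) (norm_nonneg x)]

/-- for `g : ℝ^p → ℝ` convex and `L_g`-smooth, `H` symmetric positive definite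
with smallest/largest singular values `σ_min`/`σ_max`, and `γ > 0`,
`‖y − ỹ‖ ≤ (σ_max/σ_min + γ L_g σ_max) ‖prox^{H⁻¹}_{γg}(y) − prox^{H⁻¹}_{γg}(ỹ)‖`. -/
theorem scaled_prox_smooth_lower_bound
    (g : EuclideanSpace ℝ (Fin p) → ℝ) (Lg : ℝ)
    (hgconv : ConvexOn ℝ Set.univ g)
    (gradg : EuclideanSpace ℝ (Fin p) → EuclideanSpace ℝ (Fin p))
    (hgdiff : ∀ x, HasGradientAt g (gradg x) x)
    (hglip : ∀ x y, ‖gradg x - gradg y‖ ≤ Lg * ‖x - y‖)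
    (H Hinv : EuclideanSpace ℝ (Fin p) →ₗ[ℝ] EuclideanSpace ℝ (Fin p))
    (hsymm : ∀ x y, ⟪H x, y⟫ = ⟪x, H y⟫)
    (hinv₁ : ∀ x, H (Hinv x) = x) (hinv₂ : ∀ x, Hinv (H x) = x)
    (σmin σmax : ℝ) (hσmin : 0 < σmin)
    (hlow : ∀ x, σmin * ‖x‖ ^ 2 ≤ ⟪x, H x⟫)
    (hup : ∀ x, ⟪x, H x⟫ ≤ σmax * ‖x‖ ^ 2)
    (γ : ℝ) (hγ : 0 < γ)
    (y ytil z ztil : EuclideanSpace ℝ (Fin p))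
    (hz : IsScaledProxR Hinv γ g y z) (hztil : IsScaledProxR Hinv γ g ytil ztil) :
    ‖y - ytil‖ ≤ (σmax / σmin + γ * Lg * σmax) * ‖z - ztil‖ := by
  by_cases hσmax : 0 ≤ σmax
  case neg =>
    push_neg at hσmax
    have hall : ∀ x : EuclideanSpace ℝ (Fin p), x = 0 := by
      intro x
      have h1 := le_trans (hlow x) (hup x)
      by_contra hx0
      have hxn : 0 < ‖x‖ := norm_pos_iff.mpr hx0
      nlinarith [pow_pos hxn 2]
    rw [hall (y - ytil), hall (z - ztil)]
    simp
  case pos =>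
    have h1 := prox_opt_aux g gradg hgdiff H Hinv hsymm hinv₁ γ hγ y z hz
    have h2 := prox_opt_aux g gradg hgdiff H Hinv hsymm hinv₁ γ hγ ytil ztil hztil
    set d := z - ztil with hd
    set u := gradg z - gradg ztil with hu
    have hdecomp : y - ytil = H (Hinv d + γ • u) := by
      rw [map_add, map_smul, hinv₁]
      have h9 : y - ytil = (y - z) - (ytil - ztil) + d := by rw [hd]; abel
      rw [h9, h1, h2, hu, map_sub, smul_sub]
      abel
    have hHinvd : ‖Hinv d‖ ≤ ‖d‖ / σmin := by
      have hA : σmin * ‖Hinv d‖ ^ 2 ≤ ⟪Hinv d, H (Hinv d)⟫ := hlow _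
      rw [hinv₁] at hA
      have hB : ⟪Hinv d, d⟫ ≤ ‖Hinv d‖ * ‖d‖ := real_inner_le_norm _ _
      rw [le_div_iff₀ hσmin]
      nlinarith [norm_nonneg (Hinv d), norm_nonneg d]
    have hub : ‖u‖ ≤ Lg * ‖d‖ := hglip z ztil
    calc ‖y - ytil‖ = ‖H (Hinv d + γ • u)‖ := by rw [hdecomp]
    _ ≤ σmax * ‖Hinv d + γ • u‖ := Hop_aux H hsymm σmin σmax hσmin hlow hup _
    _ ≤ σmax * (‖Hinv d‖ + γ * ‖u‖) := by
        apply mul_le_mul_of_nonneg_left _ hσmax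
        calc ‖Hinv d + γ • u‖ ≤ ‖Hinv d‖ + ‖γ • u‖ := norm_add_le _ _
        _ = ‖Hinv d‖ + γ * ‖u‖ := by rw [norm_smul, Real.norm_eq_abs, abs_of_pos hγ]
    _ ≤ σmax * (‖d‖ / σmin + γ * (Lg * ‖d‖)) := by
        apply mul_le_mul_of_nonneg_left _ hσmax
        have h10 : γ * ‖u‖ ≤ γ * (Lg * ‖d‖) := mul_le_mul_of_nonneg_left hub (le_of_lt hγ)
        linarith
    _ = (σmax / σmin + γ * Lg * σmax) * ‖d‖ := by field_simp
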